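/- Let {θ_n} be iterates of projected Imitation Gradient θ_{n+1} = P_Θ(θ_n - η∇f_n(θ_n)), where f_n = f_{θ_n} and each f_n is α-strongly convex and γ-smooth with interior minimizer θ_n* (so ∇f_n(θ_n*) = 0). Under the β-Lipschitz distribution-continuity assumption, the path variation satisfies V(θ*_{1:N}) := Σ_{n=1}^{N-1} ‖θ_n* - θ_{n+1}*‖ ≤ η(βγ/α) Σ_{n=1}^N ‖θ_n - θ_n*‖. -/

import Mathlib

/-!
The gradient of a strongly convex function is strongly monotone, hence inverse Lipschitz:
`α ‖x - y‖ ≤ ‖∇f(x) - ∇f(y)‖`. Comparing the optima of `f_n` and `f_{n+1}` this way, the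
vanishing gradients at the optima turn the gap into
`‖∇f_n(θ*_{n+1}) - ∇f_{n+1}(θ*_{n+1})‖`, which distribution continuity bounds by
`β ‖θ_n - θ_{n+1}‖`. A projected gradient step moves at most
`η ‖∇f_n(θ_n)‖ = η ‖∇f_n(θ_n) - ∇f_n(θ_n*)‖ ≤ ηγ ‖θ_n - θ_n*‖`, and summing over `n` gives
the bound.
-/

open Finset

section

variable {E : Type*} [NormedAddCommGroup E] [InnerProductSpace ℝ E]

theorem inner_gradient_sub_ge_of_strongConvex {s : Set E} {φ : E → ℝ} {g : E → E} {α : ℝ}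
    (hsc : ∀ x ∈ s, ∀ y ∈ s,
      φ y ≥ φ x + inner ℝ (g x) (y - x) + (α / 2) * ‖x - y‖ ^ 2)
    {x y : E} (hx : x ∈ s) (hy : y ∈ s) :
    α * ‖x - y‖ ^ 2 ≤ inner ℝ (g y - g x) (y - x) := by
  have hxy := hsc x hx y hy
  have hyx := hsc y hy x hx
  rw [← neg_sub y x, inner_neg_right, norm_sub_rev y x] at hyx
  rw [inner_sub_left]
  linarith

theorem mul_norm_sub_le_norm_sub_of_inner_ge {g : E → E} {α : ℝ} {x y : E}
    (h : α * ‖x - y‖ ^ 2 ≤ inner ℝ (g y - g x) (y - x)) :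
    α * ‖x - y‖ ≤ ‖g y - g x‖ := by
  rcases (norm_nonneg (x - y)).eq_or_lt with hzero | hpos
  · rw [← hzero, mul_zero]
    exact norm_nonneg _
  have hcs : α * ‖x - y‖ ^ 2 ≤ ‖g y - g x‖ * ‖x - y‖ :=
    h.trans ((real_inner_le_norm _ _).trans_eq (by rw [norm_sub_rev y x]))
  nlinarith

end

theorem norm_map_sub_smul_sub_le {E : Type*} [SeminormedAddCommGroup E] [NormedSpace ℝ E]
    {P : E → E} (hPlip : ∀ x y, ‖P x - P y‖ ≤ ‖x - y‖) {x : E} (hPx : P x = x)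
    {η : ℝ} (hη : 0 ≤ η) (v : E) :
    ‖P (x - η • v) - x‖ ≤ η * ‖v‖ :=
  calc ‖P (x - η • v) - x‖ = ‖P (x - η • v) - P x‖ := by rw [hPx]
    _ ≤ ‖(x - η • v) - x‖ := hPlip _ _
    _ = η * ‖v‖ := by
      rw [sub_sub_cancel_left, norm_neg, norm_smul, Real.norm_of_nonneg hη]

theorem sum_range_pred_le_mul_sum_range {a b : ℕ → ℝ} {c : ℝ} (hc : 0 ≤ c)
    (hb : ∀ n, 0 ≤ b n) (hab : ∀ n, a n ≤ c * b n) (N : ℕ) :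
    ∑ n ∈ range (N - 1), a n ≤ c * ∑ n ∈ range N, b n :=
  calc ∑ n ∈ range (N - 1), a n ≤ ∑ n ∈ range (N - 1), c * b n :=
        sum_le_sum fun n _ => hab n
    _ ≤ ∑ n ∈ range N, c * b n :=
      sum_le_sum_of_subset_of_nonneg (range_subset_range.mpr (Nat.sub_le N 1))
        fun n _ _ => mul_nonneg hc (hb n)
    _ = c * ∑ n ∈ range N, b n := (mul_sum _ _ _).symm

theorem path_variation_bound_general {dm : ℕ}
    (Θ : Set (EuclideanSpace ℝ (Fin dm)))
    (f : EuclideanSpace ℝ (Fin dm) → EuclideanSpace ℝ (Fin dm) → ℝ)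
    (g : EuclideanSpace ℝ (Fin dm) → EuclideanSpace ℝ (Fin dm) → EuclideanSpace ℝ (Fin dm))
    (α β γ : ℝ) (hα : 0 < α) (hβ : 0 ≤ β) (hγ : 0 < γ)
    (hsc : ∀ p ∈ Θ, ∀ x ∈ Θ, ∀ y ∈ Θ,
      f p y ≥ f p x + (inner ℝ (g p x) (y - x) : ℝ) + (α / 2) * ‖x - y‖ ^ 2)
    (hsm : ∀ p ∈ Θ, ∀ x y, ‖g p x - g p y‖ ≤ γ * ‖x - y‖)
    (hlip : ∀ p₁ ∈ Θ, ∀ p₂ ∈ Θ, ∀ x ∈ Θ, ‖g p₁ x - g p₂ x‖ ≤ β * ‖p₁ - p₂‖)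
    (P : EuclideanSpace ℝ (Fin dm) → EuclideanSpace ℝ (Fin dm))
    (hPfix : ∀ y ∈ Θ, P y = y)
    (hPlip : ∀ x y, ‖P x - P y‖ ≤ ‖x - y‖)
    (η : ℝ) (hη : 0 < η)
    (θ θs : ℕ → EuclideanSpace ℝ (Fin dm))
    (hθmem : ∀ n, θ n ∈ Θ) (hθsmem : ∀ n, θs n ∈ Θ)
    (hupdate : ∀ n, θ (n + 1) = P (θ n - η • g (θ n) (θ n)))
    (hinterior : ∀ n, g (θ n) (θs n) = 0)
    (N : ℕ) :
    ∑ n ∈ Finset.range (N - 1), ‖θs n - θs (n + 1)‖ ≤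
      η * (β * γ / α) * ∑ n ∈ Finset.range N, ‖θ n - θs n‖ := by
  have hstep : ∀ n, ‖θ n - θ (n + 1)‖ ≤ η * γ * ‖θ n - θs n‖ := fun n =>
    calc ‖θ n - θ (n + 1)‖ ≤ η * ‖g (θ n) (θ n) - g (θ n) (θs n)‖ := by
          rw [norm_sub_rev, hupdate n, hinterior n, sub_zero]
          exact norm_map_sub_smul_sub_le hPlip (hPfix _ (hθmem n)) hη.le _
      _ ≤ η * (γ * ‖θ n - θs n‖) := by gcongr; exact hsm _ (hθmem n) _ _
      _ = η * γ * ‖θ n - θs n‖ := by ring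
  have hdrift : ∀ n, α * ‖θs n - θs (n + 1)‖ ≤ β * ‖θ n - θ (n + 1)‖ := fun n =>
    calc α * ‖θs n - θs (n + 1)‖ ≤ ‖g (θ n) (θs (n + 1)) - g (θ n) (θs n)‖ :=
          mul_norm_sub_le_norm_sub_of_inner_ge <|
            inner_gradient_sub_ge_of_strongConvex (hsc _ (hθmem n)) (hθsmem n) (hθsmem (n + 1))
      _ = ‖g (θ n) (θs (n + 1)) - g (θ (n + 1)) (θs (n + 1))‖ := by
          rw [hinterior n, hinterior (n + 1)]
      _ ≤ β * ‖θ n - θ (n + 1)‖ := hlip _ (hθmem n) _ (hθmem (n + 1)) _ (hθsmem (n + 1))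
  refine sum_range_pred_le_mul_sum_range (by positivity) (fun n => norm_nonneg _) (fun n => ?_) N
  calc ‖θs n - θs (n + 1)‖ ≤ β / α * ‖θ n - θ (n + 1)‖ := by
        rw [div_mul_eq_mul_div, le_div_iff₀ hα, mul_comm]
        exact hdrift n
    _ ≤ β / α * (η * γ * ‖θ n - θs n‖) := by gcongr; exact hstep n
    _ = η * (β * γ / α) * ‖θ n - θs n‖ := by ring

/-- Lemma (path variation bound for Imitation Gradient): the path variation of
the optimal parameters is bounded by η(βγ/α) times the cumulative distance of
the iterates to their instantaneous optima. -/
theorem path_variation_bound {dm : ℕ}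
    (Θ : Set (EuclideanSpace ℝ (Fin dm)))
    (hconv : Convex ℝ Θ) (hcomp : IsCompact Θ)
    (f : EuclideanSpace ℝ (Fin dm) → EuclideanSpace ℝ (Fin dm) → ℝ)
    (g : EuclideanSpace ℝ (Fin dm) → EuclideanSpace ℝ (Fin dm) → EuclideanSpace ℝ (Fin dm))
    (α β γ : ℝ) (hα : 0 < α) (hβ : 0 ≤ β) (hγ : 0 < γ)
    (hsc : ∀ p ∈ Θ, ∀ x ∈ Θ, ∀ y ∈ Θ,
      f p y ≥ f p x + (inner ℝ (g p x) (y - x) : ℝ) + (α / 2) * ‖x - y‖ ^ 2)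
    (hsm : ∀ p ∈ Θ, ∀ x y, ‖g p x - g p y‖ ≤ γ * ‖x - y‖)
    (hlip : ∀ p₁ ∈ Θ, ∀ p₂ ∈ Θ, ∀ x ∈ Θ, ‖g p₁ x - g p₂ x‖ ≤ β * ‖p₁ - p₂‖)
    (P : EuclideanSpace ℝ (Fin dm) → EuclideanSpace ℝ (Fin dm))
    (hPmem : ∀ x, P x ∈ Θ)
    (hPfix : ∀ y ∈ Θ, P y = y)
    (hPlip : ∀ x y, ‖P x - P y‖ ≤ ‖x - y‖)
    (η : ℝ) (hη : 0 < η)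
    (θ θs : ℕ → EuclideanSpace ℝ (Fin dm))
    (hθmem : ∀ n, θ n ∈ Θ) (hθsmem : ∀ n, θs n ∈ Θ)
    (hupdate : ∀ n, θ (n + 1) = P (θ n - η • g (θ n) (θ n)))
    (hmin : ∀ n, IsMinOn (f (θ n)) Θ (θs n))
    (hinterior : ∀ n, g (θ n) (θs n) = 0)
    (N : ℕ) :
    ∑ n ∈ Finset.range (N - 1), ‖θs n - θs (n + 1)‖ ≤
      η * (β * γ / α) * ∑ n ∈ Finset.range N, ‖θ n - θs n‖ :=
  path_variation_bound_general Θ f g α β γ hα hβ hγ hsc hsm hlip P hPfix hPlip η hη θ θs hθmem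
    hθsmem hupdate hinterior N
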